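/- For the tridiagonal Toeplitz matrix T = (n;1;σ₁,0,τ₁) with zero diagonal, the squared 3-banded Toeplitz structured Frobenius distance Δ_F⁺(T)² to the set of symmetric positive semidefinite tridiagonal Toeplitz matrices satisfies ((n−1)/4)(3σ₁² + 3τ₁² − 2σ₁τ₁) ≤ Δ_F⁺(T)² ≤ (n−1)(σ₁² + τ₁²). -/

import Mathlib

open Matrix Real Finset

/-- Squared Frobenius norm of a real square matrix. -/
def frobSq {n : ℕ} (A : Matrix (Fin n) (Fin n) ℝ) : ℝ := ∑ i, ∑ j, (A i j)^2

/-- A matrix is Toeplitz if its entries are constant along diagonals. -/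
def IsToeplitz {n : ℕ} (A : Matrix (Fin n) (Fin n) ℝ) : Prop :=
  ∀ i j i' j' : Fin n, (i : ℤ) - (j : ℤ) = (i' : ℤ) - (j' : ℤ) → A i j = A i' j'

/-- The (2k+1)-banded Toeplitz matrix (n;k;σ,δ,τ): subdiagonals σ₁,…,σ_k,
diagonal δ, superdiagonals τ₁,…,τ_k. -/
def bandedToeplitz (n k : ℕ) (σ τ : ℕ → ℝ) (δ : ℝ) : Matrix (Fin n) (Fin n) ℝ :=
  Matrix.of fun i j =>
    if (i : ℕ) = (j : ℕ) then δ
    else if (j : ℕ) < (i : ℕ) ∧ (i : ℕ) - (j : ℕ) ≤ k then σ ((i : ℕ) - (j : ℕ))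
    else if (i : ℕ) < (j : ℕ) ∧ (j : ℕ) - (i : ℕ) ≤ k then τ ((j : ℕ) - (i : ℕ))
    else 0

/-- The tridiagonal Toeplitz matrix (n;1;σ₁,δ,τ₁). -/
def triToeplitz (n : ℕ) (σ₁ δ τ₁ : ℝ) : Matrix (Fin n) (Fin n) ℝ :=
  bandedToeplitz n 1 (fun _ => σ₁) (fun _ => τ₁) δ

/-!
The upper bound is the distance to `0`. For the lower bound let `S = (n;1;s,e,t)` be positive
semidefinite. It is symmetric, so `t = s`, and its quadratic form at `(1,1,…,1)` and
`(1,-1,1,…)` gives `n e ≥ 2 (n-1) |s|`; as `n ≤ 2 (n-1)` this yields `n e² ≥ 2 (n-1) s²`. Hence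
`‖T - S‖_F² = n e² + (n-1) ((σ₁-s)² + (τ₁-s)²) ≥ (n-1) (2 s² + (σ₁-s)² + (τ₁-s)²)`, and the
right-hand side is smallest at `s = (σ₁ + τ₁) / 4`, where it equals the stated bound.
-/

lemma triToeplitz_sub_triToeplitz (n : ℕ) (a c b a' c' b' : ℝ) :
    triToeplitz n a c b - triToeplitz n a' c' b' = triToeplitz n (a - a') (c - c') (b - b') := by
  ext i j
  simp only [triToeplitz, bandedToeplitz, Matrix.sub_apply, of_apply]
  split_ifs <;> ring

lemma sum_range_ite_succ_lt {M : Type*} [AddCommMonoid M] (n : ℕ) (f : ℕ → M) :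
    ∑ i ∈ range n, (if i + 1 < n then f i else 0) = ∑ i ∈ range (n - 1), f i := by
  rw [← sum_filter]
  congr 1
  ext i
  simp only [mem_filter, mem_range]
  omega

lemma sum_sum_triToeplitz_apply {M : Type*} [AddCommMonoid M] (n : ℕ) (a c b : ℝ)
    (F : ℕ → ℕ → ℝ → M) (hF : ∀ i j, F i j 0 = 0) :
    ∑ i : Fin n, ∑ j : Fin n, F i j (triToeplitz n a c b i j) =
      ∑ i ∈ range n, F i i c + ∑ i ∈ range (n - 1), (F (i + 1) i a + F i (i + 1) b) := by
  set G : ℕ → ℕ → M := fun i j => (if i = j then F i j c else 0) +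
    ((if i = j + 1 then F i j a else 0) + (if j = i + 1 then F i j b else 0))
  have entry : ∀ i j : Fin n, F i j (triToeplitz n a c b i j) = G i j := by
    intro i j
    simp only [G, triToeplitz, bandedToeplitz, of_apply]
    split_ifs <;> first | (exfalso; omega) | simp_all
  have hrange : ∑ i : Fin n, ∑ j : Fin n, F i j (triToeplitz n a c b i j) =
      ∑ i ∈ range n, ∑ j ∈ range n, G i j := by
    simp only [Finset.sum_range, entry]
  rw [hrange]
  simp only [G, sum_add_distrib]
  rw [sum_comm (f := fun i j => if i = j + 1 then F i j a else 0)]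
  simp only [sum_ite_eq, sum_ite_eq', mem_range]
  rw [sum_range_ite_succ_lt, sum_range_ite_succ_lt]
  congr 1
  exact sum_congr rfl fun i hi => if_pos (mem_range.1 hi)

lemma frobSq_triToeplitz (n : ℕ) (a c b : ℝ) :
    frobSq (triToeplitz n a c b) = n * c ^ 2 + (n - 1 : ℕ) * (a ^ 2 + b ^ 2) := by
  rw [frobSq, sum_sum_triToeplitz_apply n a c b (fun _ _ x => x ^ 2) (fun _ _ => zero_pow two_ne_zero)]
  simp only [sum_const, card_range, nsmul_eq_mul]

lemma dotProduct_mulVec_triToeplitz_pow (n : ℕ) (a c b : ℝ) {ε : ℝ} (hε : ε ^ 2 = 1) :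
    (fun i : Fin n => ε ^ (i : ℕ)) ⬝ᵥ (triToeplitz n a c b *ᵥ fun i => ε ^ (i : ℕ)) =
      n * c + (n - 1 : ℕ) * (ε * (a + b)) := by
  have hpow : ∀ i : ℕ, ε ^ i * ε ^ i = 1 := fun i => by rw [← mul_pow, ← sq, hε, one_pow]
  simp only [dotProduct, mulVec, mul_sum]
  rw [sum_sum_triToeplitz_apply n a c b (fun i j x => ε ^ i * (x * ε ^ j)) (by simp)]
  have hdiag : ∀ i : ℕ, ε ^ i * (c * ε ^ i) = c := fun i => by
    rw [mul_left_comm, hpow, mul_one]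
  have hoff : ∀ i : ℕ, ε ^ (i + 1) * (a * ε ^ i) + ε ^ i * (b * ε ^ (i + 1)) = ε * (a + b) :=
    fun i => by linear_combination (ε * (a + b)) * hpow i
  simp only [hdiag, hoff, sum_const, card_range, nsmul_eq_mul]

namespace Matrix.PosSemidef

variable {n : ℕ} {a c b : ℝ}

lemma triToeplitz_super_eq_sub (hn : 2 ≤ n) (h : (triToeplitz n a c b).PosSemidef) : b = a := by
  have hsym := h.isHermitian.apply ⟨1, by omega⟩ ⟨0, by omega⟩
  simpa [triToeplitz, bandedToeplitz] using hsym

lemma triToeplitz_mul_abs_add_le (h : (triToeplitz n a c b).PosSemidef) :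
    ((n - 1 : ℕ) : ℝ) * |a + b| ≤ n * c := by
  have hplus := h.dotProduct_mulVec_nonneg fun i => (1 : ℝ) ^ (i : ℕ)
  have hminus := h.dotProduct_mulVec_nonneg fun i => (-1 : ℝ) ^ (i : ℕ)
  rw [star_trivial, dotProduct_mulVec_triToeplitz_pow n a c b (one_pow 2)] at hplus
  rw [star_trivial, dotProduct_mulVec_triToeplitz_pow n a c b (by norm_num)] at hminus
  rcases abs_cases (a + b) with ⟨habs, -⟩ | ⟨habs, -⟩ <;> rw [habs] <;> linarith

lemma triToeplitz_two_mul_sq_le (hn : 2 ≤ n)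
    (h : (triToeplitz n a c a).PosSemidef) : 2 * ((n : ℝ) - 1) * a ^ 2 ≤ n * c ^ 2 := by
  have hbound := h.triToeplitz_mul_abs_add_le
  have hn' : (2 : ℝ) ≤ n := by exact_mod_cast hn
  rw [← two_mul, abs_mul, abs_two, Nat.cast_pred (by omega)] at hbound
  have hsq : (2 * (n - 1) * |a|) ^ 2 ≤ (n * c) ^ 2 := by
    have : 0 ≤ 2 * ((n : ℝ) - 1) * |a| := mul_nonneg (by linarith) (abs_nonneg a)
    nlinarith
  refine le_of_mul_le_mul_left ?_ (by linarith : (0 : ℝ) < n)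
  calc (n : ℝ) * (2 * (n - 1) * a ^ 2) ≤ (2 * (n - 1) * |a|) ^ 2 := by
        rw [mul_pow, sq_abs]
        nlinarith [mul_nonneg (mul_nonneg (by linarith : (0 : ℝ) ≤ n - 1)
          (by linarith : (0 : ℝ) ≤ n - 2)) (sq_nonneg a)]
    _ ≤ (n * c) ^ 2 := hsq
    _ = n * (n * c ^ 2) := by ring

end Matrix.PosSemidef

lemma triToeplitz_zero (n : ℕ) : triToeplitz n 0 0 0 = 0 := by
  ext i j
  simp [triToeplitz, bandedToeplitz]

lemma le_frobSq_triToeplitz_sub_of_posSemidef {n : ℕ} (hn : 2 ≤ n) (σ₁ τ₁ : ℝ) {s e t : ℝ}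
    (h : (triToeplitz n s e t).PosSemidef) :
    (((n : ℝ) - 1) / 4) * (3 * σ₁ ^ 2 + 3 * τ₁ ^ 2 - 2 * σ₁ * τ₁) ≤
      frobSq (triToeplitz n σ₁ 0 τ₁ - triToeplitz n s e t) := by
  have hts : t = s := h.triToeplitz_super_eq_sub hn
  subst t
  have hdiag := h.triToeplitz_two_mul_sq_le hn
  rw [triToeplitz_sub_triToeplitz, frobSq_triToeplitz, Nat.cast_pred (by omega)]
  have hn1 : (0 : ℝ) ≤ n - 1 := by
    have : (2 : ℝ) ≤ n := by exact_mod_cast hn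
    linarith
  have hoff : (3 * σ₁ ^ 2 + 3 * τ₁ ^ 2 - 2 * σ₁ * τ₁) / 4 ≤
      2 * s ^ 2 + ((σ₁ - s) ^ 2 + (τ₁ - s) ^ 2) := by
    nlinarith [sq_nonneg (4 * s - σ₁ - τ₁)]
  calc (((n : ℝ) - 1) / 4) * (3 * σ₁ ^ 2 + 3 * τ₁ ^ 2 - 2 * σ₁ * τ₁)
      ≤ (n - 1) * (2 * s ^ 2 + ((σ₁ - s) ^ 2 + (τ₁ - s) ^ 2)) := by
        rw [div_mul_eq_mul_div, mul_div_assoc]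
        exact mul_le_mul_of_nonneg_left hoff hn1
    _ ≤ n * (0 - e) ^ 2 + (n - 1) * ((σ₁ - s) ^ 2 + (τ₁ - s) ^ 2) := by
        nlinarith

/-- for `T = (n;1;σ₁,0,τ₁)`, the squared tridiagonal-Toeplitz
structured Frobenius distance to the symmetric positive semidefinite tridiagonal
Toeplitz matrices satisfies
`((n−1)/4)(3σ₁² + 3τ₁² − 2σ₁τ₁) ≤ Δ_F⁺(T)² ≤ (n−1)(σ₁² + τ₁²)`. -/
theorem tridiag_structured_dist_bounds {n : ℕ} (hn : 2 ≤ n) (σ₁ τ₁ : ℝ) :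
    (((n : ℝ) - 1)/4) * (3*σ₁^2 + 3*τ₁^2 - 2*σ₁*τ₁) ≤
      sInf {d : ℝ | ∃ s t e : ℝ, (triToeplitz n s e t).PosSemidef ∧
        d = frobSq (triToeplitz n σ₁ 0 τ₁ - triToeplitz n s e t)} ∧
    sInf {d : ℝ | ∃ s t e : ℝ, (triToeplitz n s e t).PosSemidef ∧
        d = frobSq (triToeplitz n σ₁ 0 τ₁ - triToeplitz n s e t)} ≤
      ((n : ℝ) - 1) * (σ₁^2 + τ₁^2) := by
  set D := {d : ℝ | ∃ s t e : ℝ, (triToeplitz n s e t).PosSemidef ∧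
    d = frobSq (triToeplitz n σ₁ 0 τ₁ - triToeplitz n s e t)}
  have hzero : ((n : ℝ) - 1) * (σ₁ ^ 2 + τ₁ ^ 2) ∈ D := by
    refine ⟨0, 0, 0, triToeplitz_zero n ▸ PosSemidef.zero, ?_⟩
    rw [triToeplitz_zero, sub_zero, frobSq_triToeplitz, Nat.cast_pred (by omega)]
    ring
  have hlower : ∀ d ∈ D, (((n : ℝ) - 1) / 4) * (3 * σ₁ ^ 2 + 3 * τ₁ ^ 2 - 2 * σ₁ * τ₁) ≤ d := by
    rintro _ ⟨s, t, e, hpsd, rfl⟩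
    exact le_frobSq_triToeplitz_sub_of_posSemidef hn σ₁ τ₁ hpsd
  exact ⟨le_csInf ⟨_, hzero⟩ hlower, csInf_le ⟨_, hlower⟩ hzero⟩
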